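/- (Multiplicativity of the double-slash) Let f : Ω → L be quasi-modular of weight k, type m and depth ≤ ℓ₁ for Γ with coefficient family (f₀,…,f_{ℓ₁}), and let g : Ω → L be quasi-modular of weight k', type m' and depth ≤ ℓ₂ for Γ with coefficient family (g₀,…,g_{ℓ₂}). Then the product fg is quasi-modular of weight k+k', type m+m' and depth ≤ ℓ₁+ℓ₂ for Γ with coefficient family (h_s)_{s=0,…,ℓ₁+ℓ₂}, h_s := Σ_{i+j=s} f_i·g_j, and for every γ ∈ GL₂(F): (fg) ∥_{k+k',m+m'} γ = (f ∥_{k,m} γ)·(g ∥_{k',m'} γ), where the double-slash of fg is taken with respect to the family (h_s). -/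

import Mathlib

/-!
Both the slash expansion `∑ fᵢ(z) (c/(cz+d))ⁱ` and the double slash `∑ fᵢ(γz) wᵢ` pair the
coefficients with weights satisfying `w_{k+k',m+m'}(i+j) = w_{k,m}(i) · w_{k',m'}(j)`, because
`cz + d ≠ 0` on `Ω` lets the exponents add. For such weights the Cauchy-product family `h_s`
expands to the product of the two expansions.
-/

noncomputable section

namespace DrinfeldQM

variable {L : Type*} [Field L]

/-- Entry `(i,j)` of `γ ∈ GL₂(F)`, viewed inside `L`. -/
def Mc (F : Subfield L) (γ : GL (Fin 2) F) (i j : Fin 2) : L :=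
  ((γ : Matrix (Fin 2) (Fin 2) F) i j : L)

/-- Determinant of `γ ∈ GL₂(F)`, viewed inside `L`. -/
def detL (F : Subfield L) (γ : GL (Fin 2) F) : L :=
  ((γ : Matrix (Fin 2) (Fin 2) F).det : L)

/-- Automorphy factor `cz + d`. -/
def jf (F : Subfield L) (γ : GL (Fin 2) F) (z : L) : L :=
  Mc F γ 1 0 * z + Mc F γ 1 1

/-- Fractional linear action of `GL₂(F)` on `L` (restricting to `Ω`). -/
def act (F : Subfield L) (γ : GL (Fin 2) F) (z : L) : L :=
  (Mc F γ 0 0 * z + Mc F γ 0 1) / jf F γ z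

/-- The Drinfeld upper half plane `Ω = L ∖ F`. -/
def Omega (F : Subfield L) : Set L := {z | z ∉ F}

/-- The slash operator `f |_{k,m} γ` of weight `k` and type `m`. -/
def slash (F : Subfield L) (k m : ℤ) (f : L → L) (γ : GL (Fin 2) F) : L → L :=
  fun z => detL F γ ^ m * jf F γ z ^ (-k) * f (act F γ z)

/-- `f` is quasi-modular of weight `k`, type `m` and depth `≤ ℓ` for the set `S ⊆ GL₂(F)`
with coefficient family `fam` (only the indices `0,…,ℓ` of `fam` are relevant). -/
def IsQM (F : Subfield L) (S : Set (GL (Fin 2) F)) (k m : ℤ) (ℓ : ℕ)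
    (f : L → L) (fam : ℕ → L → L) : Prop :=
  Set.EqOn (fam 0) f (Omega F) ∧
    ∀ γ ∈ S, ∀ z ∈ Omega F,
      slash F k m f γ z =
        ∑ i ∈ Finset.range (ℓ + 1), fam i z * (Mc F γ 1 0 / jf F γ z) ^ i

/-- The coefficient family of the `i`-th coefficient `f_i` of a quasi-modular function with
coefficient family `fam`:  `(f_i)_h = ((h+i) choose i) · f_{h+i}`. -/
def shiftFam (i : ℕ) (fam : ℕ → L → L) : ℕ → L → L :=
  fun h z => ((h + i).choose i : L) * fam (h + i) z

/-- The double-slash operator `f ∥_{k,m} γ` of a quasi-modular function of depth `≤ ℓ` with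
coefficient family `fam`. -/
def dslash (F : Subfield L) (k m : ℤ) (ℓ : ℕ) (fam : ℕ → L → L)
    (γ : GL (Fin 2) F) : L → L :=
  fun z => ∑ i ∈ Finset.range (ℓ + 1),
    (-(Mc F γ 1 0) / jf F γ z) ^ i * detL F γ ^ (m - (i : ℤ)) *
      jf F γ z ^ (2 * (i : ℤ) - k) * fam i (act F γ z)

/-- The double-slash operator on polynomial-valued functions `P : Ω → L[X]`:
`(P ∥_{k,m} γ)(z, X) = (det γ)^m (cz+d)^{-k} P(γ·z, ((cz+d)²/det γ)(X - c/(cz+d)))`. -/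
def pdslash (F : Subfield L) (k m : ℤ) (P : L → Polynomial L)
    (γ : GL (Fin 2) F) : L → Polynomial L :=
  fun z =>
    Polynomial.C (detL F γ ^ m * jf F γ z ^ (-k)) *
      (P (act F γ z)).comp
        (Polynomial.C (jf F γ z ^ 2 / detL F γ) *
          (Polynomial.X - Polynomial.C (Mc F γ 1 0 / jf F γ z)))

/-- The associated polynomial `P_f(z, X) = ∑_{i=0}^{ℓ} f_i(z) Xⁱ`. -/
def assocPoly (ℓ : ℕ) (fam : ℕ → L → L) : L → Polynomial L :=
  fun z => ∑ i ∈ Finset.range (ℓ + 1), Polynomial.C (fam i z) * Polynomial.X ^ i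

/-- `E` satisfies the functional equation of the false Eisenstein series (weight 2, type 1,
depth 1, coefficient family `(E, -π⁻¹)`) for all `γ ∈ S`. -/
def EFunEq (F : Subfield L) (S : Set (GL (Fin 2) F)) (π : L) (E : L → L) : Prop :=
  ∀ γ ∈ S, ∀ z ∈ Omega F,
    E (act F γ z) =
      (detL F γ)⁻¹ * jf F γ z ^ 2 * (E z - Mc F γ 1 0 / (π * jf F γ z))

/-- The product coefficient family `h_s = ∑_{i+j=s} fᵢ·g_j` (with `i ≤ ℓ₁`, `j ≤ ℓ₂`). -/
def prodFam {L : Type*} [Field L] (ℓ₁ ℓ₂ : ℕ) (fam gam : ℕ → L → L) : ℕ → L → L :=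
  fun s z => ∑ i ∈ Finset.range (ℓ₁ + 1), ∑ j ∈ Finset.range (ℓ₂ + 1),
    if i + j = s then fam i z * gam j z else 0

lemma detL_ne_zero (F : Subfield L) (γ : GL (Fin 2) F) : detL F γ ≠ 0 := by
  unfold detL
  exact_mod_cast ((Matrix.isUnit_iff_isUnit_det _).mp γ.isUnit).ne_zero

lemma detL_eq (F : Subfield L) (γ : GL (Fin 2) F) :
    detL F γ = Mc F γ 0 0 * Mc F γ 1 1 - Mc F γ 0 1 * Mc F γ 1 0 := by
  unfold detL Mc
  rw [Matrix.det_fin_two]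
  push_cast
  ring

/-- If `c ≠ 0` then `cz + d = 0` puts `z = -d/c` in `F`; if `c = 0` then `d ≠ 0` since
`det γ ≠ 0`. -/
lemma jf_ne_zero (F : Subfield L) (γ : GL (Fin 2) F) {z : L} (hz : z ∈ Omega F) :
    jf F γ z ≠ 0 := by
  intro h
  by_cases hc : Mc F γ 1 0 = 0
  · have hd : Mc F γ 1 1 = 0 := by simpa [jf, hc] using h
    exact detL_ne_zero F γ (by rw [detL_eq, hc, hd]; ring)
  · have hz_eq : z = -Mc F γ 1 1 / Mc F γ 1 0 := by
      rw [eq_div_iff hc]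
      unfold jf at h
      linear_combination h
    apply hz
    rw [hz_eq]
    exact F.div_mem (F.neg_mem (SetLike.coe_mem _)) (SetLike.coe_mem _)

lemma slash_mul (F : Subfield L) (k k' m m' : ℤ) (f g : L → L) (γ : GL (Fin 2) F) {z : L}
    (hz : jf F γ z ≠ 0) :
    slash F (k + k') (m + m') (fun w => f w * g w) γ z =
      slash F k m f γ z * slash F k' m' g γ z := by
  simp only [slash]
  rw [zpow_add₀ (detL_ne_zero F γ), neg_add, zpow_add₀ hz]
  ring

def dslashWeight (F : Subfield L) (k m : ℤ) (γ : GL (Fin 2) F) (z : L) (i : ℕ) : L :=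
  (-(Mc F γ 1 0) / jf F γ z) ^ i * detL F γ ^ (m - (i : ℤ)) * jf F γ z ^ (2 * (i : ℤ) - k)

lemma dslash_eq_sum_dslashWeight (F : Subfield L) (k m : ℤ) (ℓ : ℕ) (fam : ℕ → L → L)
    (γ : GL (Fin 2) F) (z : L) :
    dslash F k m ℓ fam γ z =
      ∑ i ∈ Finset.range (ℓ + 1), fam i (act F γ z) * dslashWeight F k m γ z i :=
  Finset.sum_congr rfl fun _ _ => mul_comm _ _

lemma dslashWeight_add (F : Subfield L) (k k' m m' : ℤ) (γ : GL (Fin 2) F) {z : L}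
    (hz : jf F γ z ≠ 0) (i j : ℕ) :
    dslashWeight F (k + k') (m + m') γ z (i + j) =
      dslashWeight F k m γ z i * dslashWeight F k' m' γ z j := by
  have hdet : m + m' - ((i + j : ℕ) : ℤ) = (m - i) + (m' - j) := by push_cast; ring
  have hjf : 2 * ((i + j : ℕ) : ℤ) - (k + k') = (2 * i - k) + (2 * j - k') := by push_cast; ring
  simp only [dslashWeight]
  rw [hdet, hjf, zpow_add₀ (detL_ne_zero F γ), zpow_add₀ hz, pow_add]
  ring

lemma prodFam_zero (ℓ₁ ℓ₂ : ℕ) (fam gam : ℕ → L → L) (z : L) :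
    prodFam ℓ₁ ℓ₂ fam gam 0 z = fam 0 z * gam 0 z := by
  simp only [prodFam, Nat.add_eq_zero_iff]
  rw [Finset.sum_eq_single_of_mem 0 (by simp) fun i _ hi => by simp [hi],
    Finset.sum_eq_single_of_mem 0 (by simp) fun j _ hj => by simp [hj]]
  simp

lemma sum_prodFam_mul (ℓ₁ ℓ₂ : ℕ) (fam gam : ℕ → L → L) (z : L) (a b c : ℕ → L)
    (hc : ∀ i j, c (i + j) = a i * b j) :
    ∑ s ∈ Finset.range (ℓ₁ + ℓ₂ + 1), prodFam ℓ₁ ℓ₂ fam gam s z * c s =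
      (∑ i ∈ Finset.range (ℓ₁ + 1), fam i z * a i) *
        ∑ j ∈ Finset.range (ℓ₂ + 1), gam j z * b j := by
  rw [Finset.sum_mul_sum]
  simp only [prodFam, Finset.sum_mul, ite_mul, zero_mul]
  rw [Finset.sum_comm]
  refine Finset.sum_congr rfl fun i hi => ?_
  rw [Finset.sum_comm]
  refine Finset.sum_congr rfl fun j hj => ?_
  have hij : i + j ∈ Finset.range (ℓ₁ + ℓ₂ + 1) := by
    simp only [Finset.mem_range] at hi hj ⊢
    omega
  rw [Finset.sum_ite_eq _ _ fun s => fam i z * gam j z * c s, if_pos hij, hc]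
  ring

/-- Multiplicativity of the double-slash operator: `fg` is quasi-modular of weight `k+k'`,
type `m+m'`, depth `≤ ℓ₁+ℓ₂`, and `(fg) ∥ γ = (f ∥ γ)·(g ∥ γ)` for every `γ ∈ GL₂(F)`. -/
theorem dslash_mul_multiplicative
    {L : Type*} [Field L] (F : Subfield L) (Γ : Subgroup (GL (Fin 2) F))
    (k k' m m' : ℤ) (ℓ₁ ℓ₂ : ℕ) (f g : L → L) (fam gam : ℕ → L → L)
    (hf : IsQM F (Γ : Set (GL (Fin 2) F)) k m ℓ₁ f fam)
    (hg : IsQM F (Γ : Set (GL (Fin 2) F)) k' m' ℓ₂ g gam) :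
    IsQM F (Γ : Set (GL (Fin 2) F)) (k + k') (m + m') (ℓ₁ + ℓ₂)
        (fun z => f z * g z) (prodFam ℓ₁ ℓ₂ fam gam) ∧
      ∀ γ : GL (Fin 2) F, ∀ z ∈ Omega F,
        dslash F (k + k') (m + m') (ℓ₁ + ℓ₂) (prodFam ℓ₁ ℓ₂ fam gam) γ z =
          dslash F k m ℓ₁ fam γ z * dslash F k' m' ℓ₂ gam γ z := by
  refine ⟨⟨fun z hz => ?_, fun γ hγ z hz => ?_⟩, fun γ z hz => ?_⟩
  · rw [prodFam_zero, hf.1 hz, hg.1 hz]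
  · rw [slash_mul F k k' m m' f g γ (jf_ne_zero F γ hz), hf.2 γ hγ z hz, hg.2 γ hγ z hz,
      sum_prodFam_mul _ _ _ _ _ _ _ _ fun i j => pow_add _ i j]
  · simp only [dslash_eq_sum_dslashWeight]
    exact sum_prodFam_mul _ _ _ _ _ _ _ _ (dslashWeight_add F k k' m m' γ (jf_ne_zero F γ hz))

end DrinfeldQM
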